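/- Let (E,C) be an adaptable separated graph with antisymmetrization poset I = I_free ⊔ I_reg of E⁰. Define the relation ◁ on I by p ◁ q iff p < q or p = q ∈ I_reg, and let M(I,◁) be the commutative monoid with generating set I and relations q = q + p whenever p ◁ q. Then the antisymmetrization of M(E,C), i.e., the quotient of M(E,C) by the congruence x ≈ y iff x ≤ y and y ≤ x in the algebraic pre-order, is isomorphic to M(I,◁) via the map sending the class of a_v to the generator [v]. -/

import Mathlib

/-- A (finitely) separated graph `(E,C)`: a directed graph together with,
for each vertex `v`, a partition `C v` of `s⁻¹(v)` into pairwise disjoint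
nonempty finite subsets. -/
structure SepGraph where
  V : Type
  Ed : Type
  s : Ed → V
  r : Ed → V
  C : V → Set (Finset Ed)
  c_src : ∀ v : V, ∀ X ∈ C v, ∀ e ∈ X, s e = v
  c_nonempty : ∀ v : V, ∀ X ∈ C v, X.Nonempty
  c_disjoint : ∀ v : V, ∀ X ∈ C v, ∀ Y ∈ C v, X ≠ Y → Disjoint X Y
  c_cover : ∀ e : Ed, ∃ X ∈ C (s e), e ∈ X

namespace SepGraph

variable (G : SepGraph)

/-- There is an edge from `v` to `w`. -/
def Edge (v w : G.V) : Prop := ∃ e : G.Ed, G.s e = v ∧ G.r e = w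

/-- There is a directed path from `v` to `w`. -/
def Reach : G.V → G.V → Prop := Relation.ReflTransGen G.Edge

/-- Mutual reachability: `v` and `w` lie in the same component, i.e. `[v] = [w]`. -/
def VEquiv (v w : G.V) : Prop := G.Reach v w ∧ G.Reach w v

/-- `[v] ≤ [w]` in the antisymmetrization poset `I` of `E⁰`. -/
def VLe (v w : G.V) : Prop := G.Reach w v

/-- `[v] < [w]` in the antisymmetrization poset `I` of `E⁰`. -/
def VLt (v w : G.V) : Prop := G.Reach w v ∧ ¬ G.Reach v w

/-- The free commutative monoid `F` on the vertex set `E⁰`. -/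
abbrev FreeM := G.V →₀ ℕ

/-- The basis element of `F` corresponding to a vertex. -/
noncomputable def vert (v : G.V) : G.FreeM := Finsupp.single v 1

/-- `r(X) = Σ_{e ∈ X} r(e)` as an element of `F`. -/
noncomputable def rX (X : Finset G.Ed) : G.FreeM := ∑ e ∈ X, Finsupp.single (G.r e) 1

/-- The defining relations of `M(E,C)`: `a_v = Σ_{e ∈ X} a_{r(e)}` for `X ∈ C_v`. -/
def Rel : G.FreeM → G.FreeM → Prop := fun a b =>
  ∃ v : G.V, ∃ X ∈ G.C v, a = G.vert v ∧ b = G.rX X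

/-- The congruence on `F` generated by the defining relations. -/
noncomputable def mCon : AddCon G.FreeM := addConGen G.Rel

/-- The monoid `M(E,C)` of the separated graph `(E,C)`. -/
def M := G.mCon.Quotient

noncomputable instance : AddCommMonoid G.M := inferInstanceAs (AddCommMonoid G.mCon.Quotient)

/-- The generator `a_v` of `M(E,C)`. -/
noncomputable def gen (v : G.V) : G.M := G.mCon.mk' (G.vert v)

end SepGraph

/-- The data witnessing that a separated graph is *adaptable*: the
antisymmetrization `I` of `E⁰` is finite, it is partitioned into free and
regular elements (with free components reduced to a single vertex `v^p`),
and the conditions of Definition 1.6 of the paper hold.  Here, for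
`p ∈ I_reg`, the subgraph `E_p` is the restriction of `E` to the class `p`. -/
structure SepGraph.AdaptableStructure (G : SepGraph) where
  /-- the partition `I = I_free ⊔ I_reg` (a vertex is free if its class is free) -/
  free : G.V → Prop
  /-- `I` is a finite poset -/
  finite_components : Finite (Quot G.VEquiv)
  free_respects : ∀ v w : G.V, G.VEquiv v w → (free v ↔ free w)
  /-- a free component consists of a single vertex `E_p⁰ = {v^p}` -/
  free_singleton : ∀ v : G.V, free v → ∀ w : G.V, G.VEquiv w v → w = v
  /-- for free `p`, `s⁻¹(v^p) = ∅` iff `p` is minimal in `I` -/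
  free_minimal : ∀ v : G.V, free v →
    ((¬ ∃ e : G.Ed, G.s e = v) ↔ ∀ w : G.V, G.Reach v w → G.VEquiv v w)
  /-- for free non-minimal `p`, `C_{v^p} = {X₁,…,X_{k(p)}}` is a finite family -/
  free_C_finite : ∀ v : G.V, free v → (G.C v).Finite
  /-- each `X_i ∈ C_{v^p}` contains exactly one loop `α(p,i)` at `v^p` -/
  free_loop : ∀ v : G.V, free v → ∀ X ∈ G.C v, ∃! e : G.Ed, e ∈ X ∧ G.r e = v
  /-- the remaining edges `β(p,i,t)` of `X_i` end in strictly smaller components -/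
  free_targets : ∀ v : G.V, free v → ∀ X ∈ G.C v, ∀ e ∈ X, G.r e = v ∨ G.VLt (G.r e) v
  /-- `g(p,i) ≥ 1`: there is at least one connector `β(p,i,1)` in each `X_i` -/
  free_beta : ∀ v : G.V, free v → ∀ X ∈ G.C v, ∃ e ∈ X, G.r e ≠ v
  /-- for regular `p` and `w ∈ E_p⁰`, `|C_w| = 1` -/
  reg_unique_C : ∀ w : G.V, ¬ free w → ∃! X : Finset G.Ed, X ∈ G.C w
  /-- for regular `p` and `w ∈ E_p⁰`, `|s_{E_p}⁻¹(w)| ≥ 2` -/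
  reg_two_edges : ∀ w : G.V, ¬ free w → ∃ e₁ e₂ : G.Ed, e₁ ≠ e₂ ∧ G.s e₁ = w ∧ G.s e₂ = w ∧
    G.VEquiv (G.r e₁) w ∧ G.VEquiv (G.r e₂) w
  /-- every edge leaving `w ∈ E_p⁰` stays in `E_p` or goes to some `E_q⁰` with `q < p` -/
  reg_targets : ∀ w : G.V, ¬ free w → ∀ e : G.Ed, G.s e = w →
    G.VEquiv (G.r e) w ∨ G.VLt (G.r e) w

/-- The algebraic pre-order on a commutative monoid: `x ≤ y` iff `x + z = y` for some `z`. -/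
def MLe {M : Type} [AddCommMonoid M] (x y : M) : Prop := ∃ z, x + z = y

/-- A commutative monoid is conical if `x + y = 0` implies `x = y = 0`. -/
def IsConical (M : Type) [AddCommMonoid M] : Prop := ∀ x y : M, x + y = 0 → x = 0 ∧ y = 0

/-- The refinement property for a commutative monoid. -/
def IsRefinement (M : Type) [AddCommMonoid M] : Prop := ∀ a b c d : M, a + b = c + d →
  ∃ w x y z : M, a = w + x ∧ b = y + z ∧ c = w + y ∧ d = x + z

/-- `p` is a prime element: it is not invertible, and `p ≤ a + b` implies `p ≤ a` or `p ≤ b`. -/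
def IsPrimeElem {M : Type} [AddCommMonoid M] (p : M) : Prop :=
  (¬ ∃ q, p + q = 0) ∧ ∀ a b : M, MLe p (a + b) → MLe p a ∨ MLe p b

/-- A commutative monoid is primely generated if every non-invertible element is a
sum of prime elements. -/
def IsPrimelyGenerated (M : Type) [AddCommMonoid M] : Prop :=
  ∀ x : M, (¬ ∃ q, x + q = 0) → ∃ l : Multiset M, (∀ p ∈ l, IsPrimeElem p) ∧ x = l.sum

/-- The congruence `x ≈ y iff x ≤ y and y ≤ x` (in the algebraic pre-order) on a
commutative monoid; the quotient is the antisymmetrization of the monoid. -/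
def mutualCon (M : Type) [AddCommMonoid M] : AddCon M :=
  { r := fun x y => MLe x y ∧ MLe y x
    iseqv := by
      constructor
      · intro x; exact ⟨⟨0, add_zero x⟩, ⟨0, add_zero x⟩⟩
      · intro x y h; exact ⟨h.2, h.1⟩
      · rintro x y z ⟨⟨a, ha⟩, ⟨b, hb⟩⟩ ⟨⟨c, hc⟩, ⟨d, hd⟩⟩
        exact ⟨⟨a + c, by rw [← add_assoc, ha, hc]⟩, ⟨d + b, by rw [← add_assoc, hd, hb]⟩⟩
    add' := by
      rintro w x y z ⟨⟨a, ha⟩, ⟨b, hb⟩⟩ ⟨⟨c, hc⟩, ⟨d, hd⟩⟩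
      exact ⟨⟨a + c, by rw [add_add_add_comm, ha, hc]⟩,
        ⟨b + d, by rw [add_add_add_comm, hb, hd]⟩⟩ }

namespace SepGraph

/-- The antisymmetrization `I` of `E⁰` with respect to the path-way pre-order. -/
def Idx (G : SepGraph) : Type := Quot G.VEquiv

/-- The relation `◁` on `I`: `p ◁ q` iff `p < q`, or `p = q ∈ I_reg`. -/
def tri (G : SepGraph) (A : G.AdaptableStructure) : G.Idx → G.Idx → Prop := fun p q =>
  ∃ v w : G.V, p = Quot.mk G.VEquiv v ∧ q = Quot.mk G.VEquiv w ∧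
    (G.VLt v w ∨ (G.VEquiv v w ∧ ¬ A.free v))

/-- The congruence defining the monoid `M(I,◁)`, with generating set `I` and
relations `q = q + p` whenever `p ◁ q`. -/
noncomputable def triCon (G : SepGraph) (A : G.AdaptableStructure) : AddCon (G.Idx →₀ ℕ) :=
  addConGen fun a b => ∃ p q : G.Idx, G.tri A p q ∧
    a = Finsupp.single q 1 ∧ b = Finsupp.single q 1 + Finsupp.single p 1

/-- The monoid `M(I,◁)`. -/
def MIdx (G : SepGraph) (A : G.AdaptableStructure) : Type := (G.triCon A).Quotient

noncomputable instance (G : SepGraph) (A : G.AdaptableStructure) :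
    AddCommMonoid (G.MIdx A) := inferInstanceAs (AddCommMonoid (G.triCon A).Quotient)

end SepGraph

/-! The map `a_v ↦ [v]` respects the relations of `M(E,C)`: for `X ∈ C_v`, one edge of `X`
ends in `[v]` (the loop `α` when `[v]` is free) and every other edge ends in a class `p ◁ [v]`,
which `[v]` absorbs in `M(I,◁)`. Conversely `a_w + a_v ≤ a_w` in `M(E,C)` whenever `[v] ◁ [w]`:
a regular vertex has two edges back into its component, so `2 a_w ≤ a_w`, and a free vertex
swallows the target of each non-loop edge `β ∈ X` since `a_w = a_{r α} + a_{r β} + ⋯`. So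
`[v] ↦ a_v` is well defined on `M(I,◁)` up to `≈`, and it inverts `a_v ↦ [v]` on generators.

It remains that the algebraic pre-order of `M(I,◁)` is antisymmetric, which holds for every
transitive `◁`. For each `p`, the map sending `a ∈ ℕ^(I)` to `⊤` if `a` contains some `q` with
`p ◁ q`, and to the multiplicity of `p` in `a` otherwise, is an additive `ℕ∞`-valued invariant of
the congruence. Hence if `a + c ~ b` and `b + d ~ a`, then `a ~ a + (c + d)` forces every `p`
occurring in `c` to be absorbed by `a`, so that `a ~ a + c ~ b`. -/

section AlgebraicPreorder

variable {N P : Type} [AddCommMonoid N] [AddCommMonoid P]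

theorem MLe.refl (x : N) : MLe x x := ⟨0, add_zero x⟩

theorem MLe.trans {x y z : N} (hxy : MLe x y) (hyz : MLe y z) : MLe x z := by
  obtain ⟨a, rfl⟩ := hxy
  obtain ⟨b, rfl⟩ := hyz
  exact ⟨a + b, (add_assoc x a b).symm⟩

theorem MLe.add_left {x y : N} (z : N) (h : MLe x y) : MLe (z + x) (z + y) := by
  obtain ⟨a, rfl⟩ := h
  exact ⟨a, add_assoc z x a⟩

theorem MLe.add_right {x y : N} (z : N) (h : MLe x y) : MLe (x + z) (y + z) := by
  simpa only [add_comm _ z] using h.add_left z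

theorem mle_self_add (x z : N) : MLe x (x + z) := ⟨z, rfl⟩

theorem mle_sum_of_subset {κ : Type} (f : κ → N) {T S : Finset κ} (h : T ⊆ S) :
    MLe (∑ i ∈ T, f i) (∑ i ∈ S, f i) := by
  classical
  exact ⟨∑ i ∈ S \ T, f i, by rw [add_comm, Finset.sum_sdiff h]⟩

theorem MLe.map (f : N →+ P) {x y : N} (h : MLe x y) : MLe (f x) (f y) := by
  obtain ⟨z, rfl⟩ := h
  exact ⟨f z, (map_add f x z).symm⟩

theorem mutualCon_le_ker (f : N →+ P) (hP : ∀ x y : P, MLe x y → MLe y x → x = y) :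
    mutualCon N ≤ AddCon.ker f :=
  fun _ _ h => hP _ _ (h.1.map f) (h.2.map f)

end AlgebraicPreorder

theorem AddCon.hom_ext_single {ι P : Type} [AddCommMonoid P] {c : AddCon (ι →₀ ℕ)}
    {f g : c.Quotient →+ P}
    (h : ∀ p, f (c.mk' (Finsupp.single p 1)) = g (c.mk' (Finsupp.single p 1))) : f = g :=
  AddCon.hom_ext <| Finsupp.addHom_ext' fun p => ext_nat' _ _ (h p)

theorem liftAddHom_multiplesHom_single {α P : Type} [AddCommMonoid P] (f : α → P) (a : α) :
    Finsupp.liftAddHom (fun a => multiplesHom P (f a)) (Finsupp.single a 1) = f a := by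
  rw [Finsupp.liftAddHom_apply_single, multiplesHom_apply, one_nsmul]

section Absorption

variable {ι : Type} (r : ι → ι → Prop)

/-- Presents `M(ι, r)`; `SepGraph.triCon A` is the case `r = ◁`. -/
noncomputable def absorbCon : AddCon (ι →₀ ℕ) :=
  addConGen fun a b => ∃ p q, r p q ∧
    a = Finsupp.single q 1 ∧ b = Finsupp.single q 1 + Finsupp.single p 1

def IsAbsorbed (a : ι →₀ ℕ) (p : ι) : Prop := ∃ q, a q ≠ 0 ∧ r p q

variable {r}

theorem isAbsorbed_add {a b : ι →₀ ℕ} {p : ι} :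
    IsAbsorbed r (a + b) p ↔ IsAbsorbed r a p ∨ IsAbsorbed r b p := by
  simp only [IsAbsorbed, Finsupp.add_apply, ne_eq, Nat.add_eq_zero_iff, not_and_or, or_and_right,
    exists_or]

theorem isAbsorbed_single {p q : ι} : IsAbsorbed r (Finsupp.single q 1) p ↔ r p q := by
  simp [IsAbsorbed, Finsupp.single_apply_ne_zero]

theorem absorbCon_add_single {a : ι →₀ ℕ} {p : ι} (h : IsAbsorbed r a p) :
    absorbCon r a (a + Finsupp.single p 1) := by
  obtain ⟨q, hq, hpq⟩ := h
  have hrel : absorbCon r (Finsupp.single q 1) (Finsupp.single q 1 + Finsupp.single p 1) :=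
    AddConGen.Rel.of _ _ ⟨p, q, hpq, rfl, rfl⟩
  have hsplit : a = Finsupp.single q 1 + (a - Finsupp.single q 1) :=
    (add_tsub_cancel_of_le (Finsupp.single_le_iff.mpr (Nat.one_le_iff_ne_zero.mpr hq))).symm
  rw [hsplit, add_right_comm]
  exact (absorbCon r).add hrel ((absorbCon r).refl _)

theorem absorbCon_add {a c : ι →₀ ℕ} (h : ∀ p, c p ≠ 0 → IsAbsorbed r a p) :
    absorbCon r a (a + c) := by
  let stab : AddSubmonoid (ι →₀ ℕ) :=
    { carrier := {c | absorbCon r a (a + c)}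
      zero_mem' := by simpa using (absorbCon r).refl a
      add_mem' := fun {c d} hc hd => by
        change absorbCon r a (a + (c + d))
        rw [← add_assoc]
        exact (absorbCon r).trans hd ((absorbCon r).add hc ((absorbCon r).refl d)) }
  change c ∈ stab
  rw [← c.sum_single]
  refine sum_mem fun p hp => ?_
  rw [← Finsupp.smul_single_one]
  exact nsmul_mem (absorbCon_add_single (h p (Finsupp.mem_support_iff.mp hp))) _

open Classical in
noncomputable def absorbWeight (r : ι → ι → Prop) (p : ι) : (ι →₀ ℕ) →+ ℕ∞ where
  toFun a := if IsAbsorbed r a p then ⊤ else (a p : ℕ∞)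
  map_zero' := by simp [IsAbsorbed]
  map_add' a b := by
    simp only [isAbsorbed_add, Finsupp.add_apply]
    split_ifs <;> simp_all

theorem absorbCon_le_ker_absorbWeight [IsTrans ι r] (p : ι) :
    absorbCon r ≤ AddCon.ker (absorbWeight r p) := by
  refine AddCon.addConGen_le.mpr ?_
  rintro _ _ ⟨p', q, hp'q, rfl, rfl⟩
  rw [AddCon.ker_rel, map_add, eq_comm]
  by_cases hpq : r p q
  · simp [absorbWeight, isAbsorbed_single, hpq]
  · have hpp' : ¬ r p p' := fun h => hpq (IsTrans.trans _ _ _ h hp'q)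
    have hne : p ≠ p' := by rintro rfl; exact hpq hp'q
    simp [absorbWeight, isAbsorbed_single, hpp', hne]

theorem isAbsorbed_of_absorbCon_add [IsTrans ι r] {a c : ι →₀ ℕ}
    (h : absorbCon r a (a + c)) {p : ι} (hp : c p ≠ 0) : IsAbsorbed r a p := by
  by_contra ha
  have hw := absorbCon_le_ker_absorbWeight p h
  rw [AddCon.ker_rel, map_add] at hw
  by_cases hc : IsAbsorbed r c p <;> simp [absorbWeight, ha, hc] at hw
  have : a p = a p + c p := by exact_mod_cast hw
  omega

theorem absorbCon_eq_of_mle_of_mle [IsTrans ι r] {x y : (absorbCon r).Quotient}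
    (hxy : MLe x y) (hyx : MLe y x) : x = y := by
  induction x using AddCon.induction_on with | H a => ?_
  induction y using AddCon.induction_on with | H b => ?_
  obtain ⟨z, hz⟩ := hxy
  obtain ⟨w, hw⟩ := hyx
  induction z using AddCon.induction_on with | H c => ?_
  induction w using AddCon.induction_on with | H d => ?_
  rw [← AddCon.coe_add, AddCon.eq] at hz hw
  have hcycle : absorbCon r a (a + (c + d)) := by
    rw [← add_assoc]
    exact ((absorbCon r).add hz ((absorbCon r).refl d)).trans hw |>.symm
  refine (AddCon.eq _).mpr ((absorbCon_add fun p hp => ?_).trans hz)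
  exact isAbsorbed_of_absorbCon_add hcycle (by simp [hp])

theorem absorbCon_single_add_sum {κ : Type} {q : ι} (S : Finset κ) (t : κ → ι)
    (h : ∀ i ∈ S, r (t i) q) :
    absorbCon r (Finsupp.single q 1)
      (Finsupp.single q 1 + ∑ i ∈ S, Finsupp.single (t i) 1) := by
  refine absorbCon_add fun p hp => ?_
  obtain ⟨i, hi, hti⟩ : ∃ i ∈ S, Finsupp.single (t i) 1 p ≠ 0 := by simpa using hp
  obtain rfl := (Finsupp.single_apply_ne_zero.mp hti).1
  exact isAbsorbed_single.mpr (h i hi)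

noncomputable def absorbLift {P : Type} [AddCommMonoid P] (f : ι → P)
    (hf : ∀ p q, r p q → f q + f p = f q) : (absorbCon r).Quotient →+ P :=
  (absorbCon r).lift (Finsupp.liftAddHom fun p => multiplesHom P (f p)) <|
    AddCon.addConGen_le.mpr <| by
      rintro _ _ ⟨p, q, hpq, rfl, rfl⟩
      simp [hf p q hpq]

theorem absorbLift_single {P : Type} [AddCommMonoid P] (f : ι → P)
    (hf : ∀ p q, r p q → f q + f p = f q) (p : ι) :
    absorbLift f hf ((absorbCon r).mk' (Finsupp.single p 1)) = f p :=
  (AddCon.lift_mk' _ _).trans (liftAddHom_multiplesHom_single f p)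

end Absorption

namespace SepGraph

variable {G : SepGraph}

instance : PartialOrder G.Idx where
  le := Quot.lift₂ (fun v w => G.Reach w v)
    (fun _ _ _ h => propext ⟨h.2.trans, h.1.trans⟩)
    (fun _ _ _ h => propext ⟨fun hr => hr.trans h.1, fun hr => hr.trans h.2⟩)
  le_refl := Quot.ind fun _ => Relation.ReflTransGen.refl
  le_trans := by
    refine Quot.ind fun u => Quot.ind fun v => Quot.ind fun w => ?_
    exact fun huv hvw => Relation.ReflTransGen.trans hvw huv
  le_antisymm := by
    refine Quot.ind fun v => Quot.ind fun w => ?_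
    exact fun hvw hwv => Quot.sound ⟨hwv, hvw⟩

def Idx.IsFree (A : G.AdaptableStructure) : G.Idx → Prop :=
  Quot.lift A.free fun v w h => propext (A.free_respects v w h)

theorem tri_iff (A : G.AdaptableStructure) {p q : G.Idx} :
    G.tri A p q ↔ p < q ∨ (p = q ∧ ¬ Idx.IsFree A p) := by
  constructor
  · rintro ⟨v, w, rfl, rfl, hvw | ⟨hvw, hv⟩⟩
    exacts [Or.inl hvw, Or.inr ⟨Quot.sound hvw, hv⟩]
  · induction p using Quot.ind with | mk v => ?_
    induction q using Quot.ind with | mk w => ?_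
    rintro (hvw | ⟨hvw, hv⟩)
    exacts [⟨v, w, rfl, rfl, Or.inl hvw⟩,
      ⟨v, v, rfl, hvw.symm, Or.inr ⟨⟨.refl, .refl⟩, hv⟩⟩]

instance (A : G.AdaptableStructure) : IsTrans G.Idx (G.tri A) where
  trans x p q hxp hpq := by
    rw [tri_iff] at *
    rcases hxp with hxp | ⟨rfl, hx⟩ <;> rcases hpq with hpq | ⟨rfl, hp⟩
    exacts [Or.inl (hxp.trans hpq), Or.inl hxp, Or.inl hpq, Or.inr ⟨rfl, hx⟩]

theorem gen_eq_sum {v : G.V} {X : Finset G.Ed} (hX : X ∈ G.C v) :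
    G.gen v = ∑ e ∈ X, G.gen (G.r e) := by
  have hrel : G.gen v = G.mCon.mk' (G.rX X) :=
    G.mCon.eq.mpr (AddConGen.Rel.of _ _ ⟨v, X, hX, rfl, rfl⟩)
  rw [hrel, rX, map_sum]
  rfl

theorem sum_gen_mle_gen {v : G.V} {X T : Finset G.Ed} (hX : X ∈ G.C v) (hT : T ⊆ X) :
    MLe (∑ e ∈ T, G.gen (G.r e)) (G.gen v) :=
  gen_eq_sum hX ▸ mle_sum_of_subset _ hT

theorem gen_mle_of_reach {v w : G.V} (h : G.Reach v w) : MLe (G.gen w) (G.gen v) := by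
  induction h with
  | refl => exact MLe.refl _
  | tail _ hedge ih =>
    obtain ⟨e, rfl, rfl⟩ := hedge
    obtain ⟨X, hX, he⟩ := G.c_cover e
    simpa using (sum_gen_mle_gen hX (Finset.singleton_subset_iff.mpr he)).trans ih

theorem mem_of_not_free (A : G.AdaptableStructure) {w : G.V} (hw : ¬ A.free w)
    {X : Finset G.Ed} (hX : X ∈ G.C w) {e : G.Ed} (he : G.s e = w) : e ∈ X := by
  obtain ⟨Y, hY, heY⟩ := G.c_cover e
  rw [he] at hY
  exact (A.reg_unique_C w hw).unique hY hX ▸ heY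

theorem gen_add_gen_mle_of_not_free (A : G.AdaptableStructure) {w : G.V} (hw : ¬ A.free w) :
    MLe (G.gen w + G.gen w) (G.gen w) := by
  classical
  obtain ⟨e₁, e₂, hne, hs₁, hs₂, hr₁, hr₂⟩ := A.reg_two_edges w hw
  obtain ⟨X, hX, -⟩ := A.reg_unique_C w hw
  have hpair : MLe (G.gen (G.r e₁) + G.gen (G.r e₂)) (G.gen w) := by
    simpa [Finset.sum_pair hne] using sum_gen_mle_gen hX
      (Finset.insert_subset (mem_of_not_free A hw hX hs₁)
        (Finset.singleton_subset_iff.mpr (mem_of_not_free A hw hX hs₂)))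
  exact ((gen_mle_of_reach hr₁.1).add_right _).trans
    (((gen_mle_of_reach hr₂.1).add_left _).trans hpair)

theorem gen_add_gen_mle_of_free (A : G.AdaptableStructure) {w : G.V} (hw : A.free w)
    {e : G.Ed} (hs : G.s e = w) (hr : G.r e ≠ w) : MLe (G.gen w + G.gen (G.r e)) (G.gen w) := by
  classical
  obtain ⟨X, hX, he⟩ := G.c_cover e
  rw [hs] at hX
  obtain ⟨α, ⟨hα, hαr⟩, -⟩ := A.free_loop w hw X hX
  have hne : α ≠ e := by rintro rfl; exact hr hαr
  simpa [Finset.sum_pair hne, hαr] using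
    sum_gen_mle_gen hX (Finset.insert_subset hα (Finset.singleton_subset_iff.mpr he))

theorem gen_add_gen_mle_of_vlt (A : G.AdaptableStructure) {v w : G.V} (h : G.VLt v w) :
    MLe (G.gen w + G.gen v) (G.gen w) := by
  obtain ⟨hwv, hvw⟩ := h
  induction hwv using Relation.ReflTransGen.head_induction_on with
  | refl => exact absurd .refl hvw
  | @head w u hedge huv ih =>
    obtain ⟨e, hs, rfl⟩ := hedge
    by_cases hw : A.free w
    · by_cases hloop : G.r e = w
      · exact hloop ▸ ih (hloop ▸ hvw)
      · exact ((gen_mle_of_reach huv).add_left _).trans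
          (gen_add_gen_mle_of_free A hw hs hloop)
    · exact ((gen_mle_of_reach (.head ⟨e, hs, rfl⟩ huv)).add_left _).trans
        (gen_add_gen_mle_of_not_free A hw)

noncomputable def genClass : G.Idx → (mutualCon G.M).Quotient :=
  Quot.lift (fun v => (mutualCon G.M).mk' (G.gen v))
    fun _ _ h => (mutualCon G.M).eq.mpr ⟨gen_mle_of_reach h.2, gen_mle_of_reach h.1⟩

theorem genClass_add_of_tri (A : G.AdaptableStructure) {p q : G.Idx} (h : G.tri A p q) :
    genClass q + genClass p = genClass q := by
  obtain ⟨v, w, rfl, rfl, hvw⟩ := h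
  refine (map_add (mutualCon G.M).mk' _ _).symm.trans
    ((mutualCon G.M).eq.mpr ⟨?_, mle_self_add _ _⟩)
  rcases hvw with hvw | ⟨hvw, hv⟩
  · exact gen_add_gen_mle_of_vlt A hvw
  · exact ((gen_mle_of_reach hvw.2).add_left _).trans
      (gen_add_gen_mle_of_not_free A fun hw => hv ((A.free_respects v w hvw).mpr hw))

theorem exists_mem_mk_r_eq_and_tri (A : G.AdaptableStructure) {v : G.V} {X : Finset G.Ed}
    (hX : X ∈ G.C v) [DecidableEq G.Ed] :
    ∃ e₀ ∈ X, Quot.mk G.VEquiv (G.r e₀) = Quot.mk G.VEquiv v ∧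
      ∀ e ∈ X.erase e₀, G.tri A (Quot.mk G.VEquiv (G.r e)) (Quot.mk G.VEquiv v) := by
  by_cases hv : A.free v
  · obtain ⟨α, ⟨hα, hαr⟩, hloop⟩ := A.free_loop v hv X hX
    refine ⟨α, hα, congrArg _ hαr, fun e he => ⟨_, _, rfl, rfl, Or.inl ?_⟩⟩
    obtain ⟨hne, he⟩ := Finset.mem_erase.mp he
    exact (A.free_targets v hv X hX e he).resolve_left fun her => hne (hloop e ⟨he, her⟩)
  · obtain ⟨e₁, -, -, hs₁, -, hr₁, -⟩ := A.reg_two_edges v hv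
    refine ⟨e₁, mem_of_not_free A hv hX hs₁, Quot.sound hr₁,
      fun e he => ⟨_, _, rfl, rfl, ?_⟩⟩
    have hs : G.s e = v := G.c_src v X hX e (Finset.mem_of_mem_erase he)
    refine (A.reg_targets v hv e hs).symm.imp_right fun her => ⟨her, fun hf => hv ?_⟩
    exact (A.free_respects _ _ her).mp hf

noncomputable def liftMonoid {P : Type} [AddCommMonoid P] (f : G.V → P)
    (hf : ∀ v, ∀ X ∈ G.C v, f v = ∑ e ∈ X, f (G.r e)) : G.M →+ P :=
  G.mCon.lift (Finsupp.liftAddHom fun v => multiplesHom P (f v)) <|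
    AddCon.addConGen_le.mpr <| by
      rintro _ _ ⟨v, X, hX, rfl, rfl⟩
      refine (AddCon.ker_rel _).mpr ?_
      simp only [vert, rX, map_sum, liftAddHom_multiplesHom_single]
      exact hf v X hX

theorem liftMonoid_gen {P : Type} [AddCommMonoid P] (f : G.V → P)
    (hf : ∀ v, ∀ X ∈ G.C v, f v = ∑ e ∈ X, f (G.r e)) (v : G.V) :
    liftMonoid f hf (G.gen v) = f v :=
  (AddCon.lift_mk' _ _).trans (liftAddHom_multiplesHom_single f v)

noncomputable def idxGen (A : G.AdaptableStructure) (v : G.V) : G.MIdx A :=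
  (G.triCon A).mk' (Finsupp.single (Quot.mk G.VEquiv v) 1)

theorem idxGen_eq_sum (A : G.AdaptableStructure) {v : G.V} {X : Finset G.Ed}
    (hX : X ∈ G.C v) : idxGen A v = ∑ e ∈ X, idxGen A (G.r e) := by
  classical
  obtain ⟨e₀, he₀, hr, hrest⟩ := exists_mem_mk_r_eq_and_tri A hX
  have hrel : idxGen A v =
      (G.triCon A).mk' (∑ e ∈ X, Finsupp.single (Quot.mk G.VEquiv (G.r e)) 1) := by
    refine (G.triCon A).eq.mpr ?_
    rw [← Finset.add_sum_erase X _ he₀, hr]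
    exact absorbCon_single_add_sum _ _ hrest
  rw [hrel, map_sum]
  rfl

noncomputable def toMIdx (A : G.AdaptableStructure) : G.M →+ G.MIdx A :=
  liftMonoid (idxGen A) fun _ _ => idxGen_eq_sum A

theorem toMIdx_gen (A : G.AdaptableStructure) (v : G.V) : toMIdx A (G.gen v) = idxGen A v :=
  liftMonoid_gen _ _ v

noncomputable def antisymmToMIdx (A : G.AdaptableStructure) :
    (mutualCon G.M).Quotient →+ G.MIdx A :=
  (mutualCon G.M).lift (toMIdx A) (mutualCon_le_ker _ fun _ _ => absorbCon_eq_of_mle_of_mle)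

noncomputable def ofMIdx (A : G.AdaptableStructure) : G.MIdx A →+ (mutualCon G.M).Quotient :=
  absorbLift genClass fun _ _ => genClass_add_of_tri A

theorem ofMIdx_idxGen (A : G.AdaptableStructure) (v : G.V) :
    ofMIdx A (idxGen A v) = (mutualCon G.M).mk' (G.gen v) :=
  absorbLift_single _ _ _

noncomputable def antisymmEquivMIdx (A : G.AdaptableStructure) :
    (mutualCon G.M).Quotient ≃+ G.MIdx A :=
  (antisymmToMIdx A).toAddEquiv (ofMIdx A)
    (AddCon.hom_ext <| AddCon.hom_ext_single fun v => by
      show ofMIdx A (toMIdx A (G.gen v)) = (mutualCon G.M).mk' (G.gen v)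
      rw [toMIdx_gen, ofMIdx_idxGen])
    (AddCon.hom_ext_single <| Quot.ind fun v => by
      show antisymmToMIdx A (ofMIdx A (idxGen A v)) = idxGen A v
      rw [ofMIdx_idxGen]
      exact toMIdx_gen A v)

theorem antisymmEquivMIdx_mk'_gen (A : G.AdaptableStructure) (v : G.V) :
    antisymmEquivMIdx A ((mutualCon G.M).mk' (G.gen v)) =
      (G.triCon A).mk' (Finsupp.single (Quot.mk G.VEquiv v) 1) :=
  toMIdx_gen A v

end SepGraph

/-- For an adaptable separated graph `(E,C)`, the antisymmetrization
of `M(E,C)` is isomorphic to `M(I,◁)` via the map sending the class of `a_v` to the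
generator `[v]`. -/
theorem stmt9 (G : SepGraph) (A : G.AdaptableStructure) :
    ∃ φ : (mutualCon G.M).Quotient ≃+ G.MIdx A,
      ∀ v : G.V, φ ((mutualCon G.M).mk' (G.gen v)) =
        (G.triCon A).mk' (Finsupp.single (Quot.mk G.VEquiv v) 1) :=
  ⟨SepGraph.antisymmEquivMIdx A, SepGraph.antisymmEquivMIdx_mk'_gen A⟩
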